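/- arXiv:1309.1941 — 4 statements merged into one kernel-verified Lean document; each statement's English description precedes it below -/
import Mathlib

section
/- For every graph polynomial P with integer coefficients there exists a graph polynomial Q, d.p.-equivalent to P, such that for every graph G all coefficients of Q(G;X) are nonnegative integers. Explicitly, writing P(G;X) = ∑_i h_i(G) X^i, one may take Q(G;X) = ∑_i g_i(G) X^i where g_{2i}(G) = h_i(G) and g_{2i−1}(G) = 0 if h_i(G) ≥ 0, and g_{2i−1}(G) = |h_i(G)| and g_{2i}(G) = 0 if h_i(G) < 0. -/
/-!
Writing `a = a⁺ - a⁻`, move the coefficient `a` of `X ^ i` to the two nonnegative coefficients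
`a⁺` of `X ^ (2 * i)` and `a⁻` of `X ^ (2 * i + 1)`. This map on polynomials is injective, so
composing a graph polynomial with it distinguishes exactly the same pairs of graphs.
-/

open Polynomial

noncomputable def numEdges {n : ℕ} (G : SimpleGraph (Fin n)) : ℕ := G.edgeSet.ncard

noncomputable def numComponents {n : ℕ} (G : SimpleGraph (Fin n)) : ℕ :=
  Nat.card G.ConnectedComponent

def GraphSimilar {n₁ n₂ : ℕ} (G₁ : SimpleGraph (Fin n₁)) (G₂ : SimpleGraph (Fin n₂)) : Prop :=
  n₁ = n₂ ∧ numEdges G₁ = numEdges G₂ ∧ numComponents G₁ = numComponents G₂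

def IsGraphPolynomial (P : ∀ n : ℕ, SimpleGraph (Fin n) → Polynomial ℤ) : Prop :=
  ∀ (n : ℕ) (G H : SimpleGraph (Fin n)), Nonempty (G ≃g H) → P n G = P n H

def DPEquiv (P Q : ∀ n : ℕ, SimpleGraph (Fin n) → Polynomial ℤ) : Prop :=
  ∀ (n₁ n₂ : ℕ) (G₁ : SimpleGraph (Fin n₁)) (G₂ : SimpleGraph (Fin n₂)),
    GraphSimilar G₁ G₂ → (P n₁ G₁ = P n₂ G₂ ↔ Q n₁ G₁ = Q n₂ G₂)

namespace Polynomial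

variable {R : Type*} [Ring R] [Lattice R]

noncomputable def signSplit (p : R[X]) : R[X] :=
  ∑ i ∈ p.support, (monomial (2 * i) (p.coeff i)⁺ + monomial (2 * i + 1) (p.coeff i)⁻)

theorem coeff_signSplit_two_mul (p : R[X]) (k : ℕ) :
    (signSplit p).coeff (2 * k) = (p.coeff k)⁺ := by
  rw [signSplit, finsetSum_coeff, Finset.sum_eq_single k]
  · simp [coeff_monomial]
  · intro i _ hik
    rw [coeff_add, coeff_monomial, coeff_monomial, if_neg (by omega), if_neg (by omega), add_zero]
  · intro hk
    simp [notMem_support_iff.mp hk]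

theorem coeff_signSplit_two_mul_add_one (p : R[X]) (k : ℕ) :
    (signSplit p).coeff (2 * k + 1) = (p.coeff k)⁻ := by
  rw [signSplit, finsetSum_coeff, Finset.sum_eq_single k]
  · simp [coeff_monomial]
  · intro i _ hik
    rw [coeff_add, coeff_monomial, coeff_monomial, if_neg (by omega), if_neg (by omega), add_zero]
  · intro hk
    simp [notMem_support_iff.mp hk]

theorem coeff_signSplit_nonneg (p : R[X]) (j : ℕ) : 0 ≤ (signSplit p).coeff j := by
  obtain ⟨k, rfl | rfl⟩ := j.even_or_odd'
  · simpa only [coeff_signSplit_two_mul] using posPart_nonneg _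
  · simpa only [coeff_signSplit_two_mul_add_one] using negPart_nonneg _

theorem signSplit_injective [AddLeftMono R] :
    Function.Injective (signSplit : R[X] → R[X]) := by
  intro p q h
  ext k
  refine posPart_negPart_injective (Prod.ext ?_ ?_)
  · simpa only [coeff_signSplit_two_mul] using congrArg (coeff · (2 * k)) h
  · simpa only [coeff_signSplit_two_mul_add_one] using congrArg (coeff · (2 * k + 1)) h

end Polynomial

theorem IsGraphPolynomial.comp {P : ∀ n : ℕ, SimpleGraph (Fin n) → ℤ[X]}
    (hP : IsGraphPolynomial P) (f : ℤ[X] → ℤ[X]) :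
    IsGraphPolynomial fun n G ↦ f (P n G) :=
  fun n G H h ↦ congrArg f (hP n G H h)

theorem dpEquiv_comp_of_injective (P : ∀ n : ℕ, SimpleGraph (Fin n) → ℤ[X])
    {f : ℤ[X] → ℤ[X]} (hf : Function.Injective f) :
    DPEquiv P fun n G ↦ f (P n G) :=
  fun _ _ _ _ _ ↦ hf.eq_iff.symm

/-- For every graph polynomial P with integer coefficients there is a
d.p.-equivalent graph polynomial Q all of whose coefficients are nonnegative integers
(obtained by spreading the positive and negative parts of the coefficients of P over even
and odd positions, respectively). -/
theorem stmt_8 (P : ∀ n : ℕ, SimpleGraph (Fin n) → Polynomial ℤ)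
    (hP : IsGraphPolynomial P) :
    ∃ Q : ∀ n : ℕ, SimpleGraph (Fin n) → Polynomial ℤ,
      IsGraphPolynomial Q ∧ DPEquiv P Q ∧
      ∀ (n : ℕ) (G : SimpleGraph (Fin n)) (i : ℕ), 0 ≤ (Q n G).coeff i :=
  ⟨fun n G ↦ signSplit (P n G), hP.comp signSplit,
    dpEquiv_comp_of_injective P signSplit_injective,
    fun n G ↦ coeff_signSplit_nonneg (P n G)⟩
end

section
/- Let s be a similarity function with values in ℕ and let h_i(G), for i = 0, …, s(G), be graph parameters with values in ℕ, and set P(G;X) = ∑_{i=0}^{s(G)} h_i(G) X^i. Define P₃(G;X) = ∏_{i=0}^{s(G)} (X − i)^{h_i(G)+1}. Then P₃ is d.p.-equivalent to P, and for every graph G every complex root of P₃(G;X) is a nonnegative integer (in particular real). -/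
open Polynomial

/-! Once similarity fixes `s(G)`, both `P(G)` and `P₃(G)` are injective encodings of the
sequence `h_0(G), …, h_{s(G)}(G)`: `P` stores `h_i` as the coefficient of `Xⁱ`, `P₃` stores
`h_i + 1` as the multiplicity of the root `i`. -/

theorem coeff_sum_C_mul_X_pow {R : Type*} [Semiring R] (s : Finset ℕ) (a : ℕ → R) (j : ℕ) :
    (∑ i ∈ s, C (a i) * X ^ i).coeff j = if j ∈ s then a j else 0 := by
  simp [finsetSum_coeff, coeff_C_mul, coeff_X_pow]

theorem sum_C_mul_X_pow_eq_iff {R : Type*} [Semiring R] {s : Finset ℕ} {a b : ℕ → R} :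
    ∑ i ∈ s, C (a i) * X ^ i = ∑ i ∈ s, C (b i) * X ^ i ↔ ∀ i ∈ s, a i = b i := by
  refine ⟨fun hab i hi => ?_, fun hab => Finset.sum_congr rfl fun i hi => by rw [hab i hi]⟩
  simpa [coeff_sum_C_mul_X_pow, hi] using congrArg (coeff · i) hab

section ProdXSubCPow

variable {R ι : Type*} [CommRing R]

theorem roots_prod_X_sub_C_pow [IsDomain R] (s : Finset ι) (a : ι → R) (e : ι → ℕ) :
    (∏ i ∈ s, (X - C (a i)) ^ e i).roots = ∑ i ∈ s, e i • {a i} := by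
  rw [roots_prod _ _ (Finset.prod_ne_zero_iff.2 fun i _ => pow_ne_zero _ (X_sub_C_ne_zero _))]
  simp only [roots_pow, roots_X_sub_C]
  rfl

theorem count_roots_prod_X_sub_C_pow [IsDomain R] [DecidableEq R] {s : Finset ι} {a : ι → R}
    (ha : Set.InjOn a s) (e : ι → ℕ) {j : ι} (hj : j ∈ s) :
    (∏ i ∈ s, (X - C (a i)) ^ e i).roots.count (a j) = e j := by
  rw [roots_prod_X_sub_C_pow, Multiset.count_sum', Finset.sum_eq_single_of_mem j hj]
  · simp
  · intro i hi hij
    simpa [Multiset.count_singleton] using fun h => absurd (ha hi hj h.symm) hij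

theorem prod_X_sub_C_pow_eq_iff [IsDomain R] {s : Finset ι} {a : ι → R} (ha : Set.InjOn a s)
    {e f : ι → ℕ} :
    ∏ i ∈ s, (X - C (a i)) ^ e i = ∏ i ∈ s, (X - C (a i)) ^ f i ↔ ∀ i ∈ s, e i = f i := by
  classical
  refine ⟨fun hef i hi => ?_, fun hef => Finset.prod_congr rfl fun i hi => by rw [hef i hi]⟩
  rw [← count_roots_prod_X_sub_C_pow ha e hi, hef, count_roots_prod_X_sub_C_pow ha f hi]

theorem exists_eq_of_aeval_prod_X_sub_C_pow_eq_zero {A : Type*} [CommRing A] [IsDomain A]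
    [Algebra R A] {s : Finset ι} {a : ι → R} {e : ι → ℕ} {z : A}
    (hz : aeval z (∏ i ∈ s, (X - C (a i)) ^ e i) = 0) : ∃ i ∈ s, z = algebraMap R A (a i) := by
  rw [map_prod] at hz
  obtain ⟨i, hi, hzi⟩ := Finset.prod_eq_zero_iff.1 hz
  simp only [map_pow, map_sub, aeval_X, aeval_C] at hzi
  exact ⟨i, hi, sub_eq_zero.1 (eq_zero_of_pow_eq_zero hzi)⟩

end ProdXSubCPow

/-- Let s be an ℕ-valued similarity function and h_i(G) ℕ-valued graph
parameters, P(G;X) = ∑_{i=0}^{s(G)} h_i(G) Xⁱ and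
P₃(G;X) = ∏_{i=0}^{s(G)} (X − i)^{h_i(G)+1}. Then P₃ is d.p.-equivalent to P and every
complex root of P₃(G;X) is a nonnegative integer. -/
theorem stmt_9 (s : ∀ n : ℕ, SimpleGraph (Fin n) → ℕ)
    (hs : ∀ (n₁ n₂ : ℕ) (G₁ : SimpleGraph (Fin n₁)) (G₂ : SimpleGraph (Fin n₂)),
        GraphSimilar G₁ G₂ → s n₁ G₁ = s n₂ G₂)
    (h : ∀ n : ℕ, SimpleGraph (Fin n) → ℕ → ℕ)
    (P P₃ : ∀ n : ℕ, SimpleGraph (Fin n) → Polynomial ℤ)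
    (hP : ∀ (n : ℕ) (G : SimpleGraph (Fin n)),
        P n G = ∑ i ∈ Finset.range (s n G + 1), C ((h n G i : ℤ)) * X ^ i)
    (hP₃ : ∀ (n : ℕ) (G : SimpleGraph (Fin n)),
        P₃ n G = ∏ i ∈ Finset.range (s n G + 1), (X - C ((i : ℤ))) ^ (h n G i + 1)) :
    DPEquiv P P₃ ∧
    ∀ (n : ℕ) (G : SimpleGraph (Fin n)) (z : ℂ),
      aeval z (P₃ n G) = 0 → ∃ m : ℕ, z = (m : ℂ) := by
  refine ⟨fun n₁ n₂ G₁ G₂ hsim => ?_, fun n G z hz => ?_⟩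
  · rw [hP, hP, hP₃, hP₃, hs _ _ _ _ hsim, sum_C_mul_X_pow_eq_iff,
      prod_X_sub_C_pow_eq_iff Nat.cast_injective.injOn]
    simp only [Nat.cast_inj, add_left_inj]
  · rw [hP₃] at hz
    obtain ⟨i, -, rfl⟩ := exists_eq_of_aeval_prod_X_sub_C_pow_eq_zero hz
    exact ⟨i, by simp⟩
end

section
/- Let s be a similarity function with values in ℕ and let P be a graph polynomial with integer coefficients such that deg P(G;X) ≤ s(G) for every graph G. Then there exists a graph polynomial Q with integer coefficients, d.p.-equivalent to P, such that for every graph G the polynomial Q(G;X) is nonzero and all of its complex roots are real. -/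
open Polynomial Finset

/-!
The polynomial `∏_{i ≤ s(G)} (X - c_i)`, where the integer `c_i` encodes the pair
`(i, [X^i] P(G))`, has only integer roots, and its root multiset determines every coefficient
of `P(G)` of index at most `s(G) ≥ deg P(G)`. Since `s` is a similarity function, the bound
`s(G)` is the same on both sides of any comparison of similar graphs, so this polynomial
distinguishes exactly the similar graphs that `P` distinguishes.
-/

theorem GraphSimilar.of_iso {n : ℕ} {G H : SimpleGraph (Fin n)} (φ : G ≃g H) :
    GraphSimilar G H :=
  ⟨rfl, by simpa [numEdges, ← Nat.card_coe_set_eq] using Nat.card_congr φ.mapEdgeSet,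
    Nat.card_congr φ.connectedComponentEquiv⟩

def pairCode (i : ℕ) (c : ℤ) : ℤ := Encodable.encode (i, c)

theorem pairCode_injective2 : Function.Injective2 pairCode := fun _ _ _ _ h =>
  Prod.ext_iff.mp (Encodable.encode_injective (Int.natCast_inj.mp h))

theorem exists_eq_of_aeval_prod_X_sub_C_eq_zero {R A ι : Type*} [CommRing R] [CommRing A]
    [IsDomain A] [Algebra R A] {s : Finset ι} {f : ι → R} {z : A}
    (hz : aeval z (∏ i ∈ s, (X - C (f i))) = 0) : ∃ i ∈ s, z = algebraMap R A (f i) := by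
  simpa [map_prod, Finset.prod_eq_zero_iff, sub_eq_zero] using hz

noncomputable def coeffRootPoly (d : ℕ) (p : ℤ[X]) : ℤ[X] :=
  ∏ i ∈ range (d + 1), (X - C (pairCode i (p.coeff i)))

theorem coeffRootPoly_monic (d : ℕ) (p : ℤ[X]) : (coeffRootPoly d p).Monic :=
  monic_prod_X_sub_C _ _

theorem roots_coeffRootPoly (d : ℕ) (p : ℤ[X]) :
    (coeffRootPoly d p).roots = (range (d + 1)).val.map fun i => pairCode i (p.coeff i) := by
  rw [← roots_multiset_prod_X_sub_C ((range (d + 1)).val.map _), Multiset.map_map]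
  rfl

theorem coeff_eq_of_coeffRootPoly_eq {d : ℕ} {p q : ℤ[X]}
    (h : coeffRootPoly d p = coeffRootPoly d q) {i : ℕ} (hi : i ≤ d) : p.coeff i = q.coeff i := by
  have hmem : pairCode i (p.coeff i) ∈ (coeffRootPoly d q).roots := by
    rw [← h, roots_coeffRootPoly]
    exact Multiset.mem_map_of_mem _ (mem_range.mpr (Nat.lt_succ_of_le hi))
  rw [roots_coeffRootPoly] at hmem
  obtain ⟨j, -, hj⟩ := Multiset.mem_map.mp hmem
  obtain ⟨rfl, hcoeff⟩ := pairCode_injective2 hj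
  exact hcoeff.symm

theorem eq_of_coeffRootPoly_eq_of_natDegree_le {d : ℕ} {p q : ℤ[X]} (hp : p.natDegree ≤ d)
    (hq : q.natDegree ≤ d)
    (h : coeffRootPoly d p = coeffRootPoly d q) : p = q := by
  ext i
  rcases le_or_gt i d with hi | hi
  · exact coeff_eq_of_coeffRootPoly_eq h hi
  · rw [coeff_eq_zero_of_natDegree_lt (hp.trans_lt hi),
      coeff_eq_zero_of_natDegree_lt (hq.trans_lt hi)]

theorem exists_eq_intCast_of_aeval_coeffRootPoly_eq_zero {d : ℕ} {p : ℤ[X]} {z : ℂ}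
    (hz : aeval z (coeffRootPoly d p) = 0) : ∃ k : ℤ, z = k := by
  obtain ⟨i, -, rfl⟩ := exists_eq_of_aeval_prod_X_sub_C_eq_zero hz
  exact ⟨_, eq_intCast _ _⟩

/-- For an ℕ-valued similarity function s and a graph polynomial P with
integer coefficients of degree at most s(G), there is a d.p.-equivalent graph polynomial Q
with integer coefficients such that Q(G;X) is nonzero and all its complex roots are real. -/
theorem stmt_10 (s : ∀ n : ℕ, SimpleGraph (Fin n) → ℕ)
    (hs : ∀ (n₁ n₂ : ℕ) (G₁ : SimpleGraph (Fin n₁)) (G₂ : SimpleGraph (Fin n₂)),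
        GraphSimilar G₁ G₂ → s n₁ G₁ = s n₂ G₂)
    (P : ∀ n : ℕ, SimpleGraph (Fin n) → Polynomial ℤ)
    (hP : IsGraphPolynomial P)
    (hdeg : ∀ (n : ℕ) (G : SimpleGraph (Fin n)), (P n G).natDegree ≤ s n G) :
    ∃ Q : ∀ n : ℕ, SimpleGraph (Fin n) → Polynomial ℤ,
      IsGraphPolynomial Q ∧ DPEquiv P Q ∧
      ∀ (n : ℕ) (G : SimpleGraph (Fin n)),
        Q n G ≠ 0 ∧ ∀ z : ℂ, aeval z (Q n G) = 0 → ∃ x : ℝ, z = (x : ℂ) := by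
  refine ⟨fun n G => coeffRootPoly (s n G) (P n G), ?_, ?_,
    fun n G => ⟨(coeffRootPoly_monic _ _).ne_zero, fun z hz => ?_⟩⟩
  · rintro n G H ⟨φ⟩
    simp only [hP n G H ⟨φ⟩, hs n n G H (.of_iso φ)]
  · intro n₁ n₂ G₁ G₂ hsim
    have hss := hs n₁ n₂ G₁ G₂ hsim
    simp only [hss]
    exact ⟨congrArg _, eq_of_coeffRootPoly_eq_of_natDegree_le ((hdeg _ _).trans hss.le) (hdeg _ _)⟩
  · obtain ⟨k, rfl⟩ := exists_eq_intCast_of_aeval_coeffRootPoly_eq_zero hz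
    exact ⟨k, (Complex.ofReal_intCast k).symm⟩
end

section
/- For every graph polynomial P with integer coefficients there exists a map D assigning to every finite simple graph G a nonzero polynomial D(G;X) ∈ ℤ[X], with D(G₁;X) = D(G₂;X) whenever G₁ and G₂ are similar, such that the graph polynomial Q(G;X) = D(G;X) · P(G;X) satisfies: the set {z ∈ ℂ : Q(G;z) = 0 for some finite simple graph G} is dense in ℂ. -/
open Polynomial

/-! The correcting factor may depend on the number of vertices alone, which similar graphs share.
Enumerate the Gaussian rationals `a + b i`, which are dense in `ℂ`, and let `D(G;X)` be a nonzero
integer polynomial vanishing at the `n(G)`-th of them: every Gaussian rational is then a root of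
`D(G;X) · P(G;X)` for some graph `G`, e.g. the edgeless graph on the right number of vertices. -/

open Complex

theorem Complex.isAlgebraic_int_ratCast_add_ratCast_mul_I (a b : ℚ) :
    IsAlgebraic ℤ ((a : ℂ) + b * I) := by
  have : Algebra.IsAlgebraic ℤ ℚ := IsLocalization.isAlgebraic ℚ (nonZeroDivisors ℤ)
  have hℚ : IsIntegral ℚ ((a : ℂ) + b * I) :=
    (isIntegral_algebraMap (x := a)).add ((isIntegral_algebraMap (x := b)).mul isIntegral_rat_I)
  exact hℚ.isAlgebraic.restrictScalars ℤ

theorem Complex.denseRange_ratCast_add_ratCast_mul_I :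
    DenseRange fun p : ℚ × ℚ => (p.1 : ℂ) + p.2 * I := by
  have hℝℝ := (Rat.denseRange_cast (𝕜 := ℝ)).prodMap (Rat.denseRange_cast (𝕜 := ℝ))
  convert equivRealProdCLM.symm.toHomeomorph.surjective.denseRange.comp hℝℝ
    equivRealProdCLM.symm.continuous using 1
  ext p
  simp [Complex.ext_iff]

theorem exists_seq_ne_zero_dense_roots {ι : Type*} [Countable ι] [Nonempty ι] {f : ι → ℂ}
    (hf : DenseRange f) (halg : ∀ i, IsAlgebraic ℤ (f i)) :
    ∃ D : ℕ → ℤ[X], (∀ n, D n ≠ 0) ∧ Dense {z : ℂ | ∃ n, aeval z (D n) = 0} := by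
  obtain ⟨e, he⟩ := exists_surjective_nat ι
  choose D hD using fun n => halg (e n)
  refine ⟨D, fun n => (hD n).1, hf.mono ?_⟩
  rw [← he.range_comp]
  rintro _ ⟨n, rfl⟩
  exact ⟨n, (hD n).2⟩

theorem stmt_15_general (P : ∀ n : ℕ, SimpleGraph (Fin n) → Polynomial ℤ) :
    ∃ D : ∀ n : ℕ, SimpleGraph (Fin n) → Polynomial ℤ,
      (∀ (n : ℕ) (G : SimpleGraph (Fin n)), D n G ≠ 0) ∧
      (∀ (n₁ n₂ : ℕ) (G₁ : SimpleGraph (Fin n₁)) (G₂ : SimpleGraph (Fin n₂)),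
          GraphSimilar G₁ G₂ → D n₁ G₁ = D n₂ G₂) ∧
      Dense {z : ℂ | ∃ (n : ℕ) (G : SimpleGraph (Fin n)),
        aeval z (D n G * P n G) = 0} := by
  obtain ⟨D, hD_ne, hD_dense⟩ := exists_seq_ne_zero_dense_roots
    denseRange_ratCast_add_ratCast_mul_I fun p => isAlgebraic_int_ratCast_add_ratCast_mul_I p.1 p.2
  refine ⟨fun n _ => D n, fun n _ => hD_ne n, ?_, hD_dense.mono ?_⟩
  · rintro n₁ n₂ G₁ G₂ ⟨rfl, -, -⟩
    rfl
  · rintro z ⟨n, hz⟩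
    exact ⟨n, ⊥, by rw [map_mul, hz, zero_mul]⟩

/-- For every graph polynomial P with integer coefficients there is a
similarity-invariant map D into nonzero polynomials of ℤ[X] such that the roots of the
graph polynomial Q(G;X) = D(G;X)·P(G;X), over all graphs, are dense in ℂ. -/
theorem stmt_15 (P : ∀ n : ℕ, SimpleGraph (Fin n) → Polynomial ℤ)
    (hP : IsGraphPolynomial P) :
    ∃ D : ∀ n : ℕ, SimpleGraph (Fin n) → Polynomial ℤ,
      (∀ (n : ℕ) (G : SimpleGraph (Fin n)), D n G ≠ 0) ∧
      (∀ (n₁ n₂ : ℕ) (G₁ : SimpleGraph (Fin n₁)) (G₂ : SimpleGraph (Fin n₂)),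
          GraphSimilar G₁ G₂ → D n₁ G₁ = D n₂ G₂) ∧
      Dense {z : ℂ | ∃ (n : ℕ) (G : SimpleGraph (Fin n)),
        aeval z (D n G * P n G) = 0} :=
  stmt_15_general P
end
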